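/- For any real number ε, the vector fields on ℝ³ (descending to the 3-torus when appropriate) R₁ = cos(θ₁+εθ₂)(∂/∂θ₂ - ε ∂/∂θ₁) + sin(θ₁+εθ₂)∂/∂θ₃, R₂ = -sin(θ₁+εθ₂)(∂/∂θ₂ - ε ∂/∂θ₁) + cos(θ₁+εθ₂)∂/∂θ₃, X = ∂/∂θ₁ + ε ∂/∂θ₂ satisfy [R₁,R₂] = 0, [R₂,X] = (1+ε²)R₁, [X,R₁] = (1+ε²)R₂. -/

import Mathlib

/-- Points of `ℝ³` with coordinates `(θ₁,θ₂,θ₃)`. -/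
abbrev T3Pt := Fin 3 → ℝ

/-- The Lie bracket of two vector fields on `ℝ³`. -/
noncomputable def vbr (v w : T3Pt → T3Pt) (p : T3Pt) : T3Pt :=
  fderiv ℝ w p (v p) - fderiv ℝ v p (w p)

/-!
All three fields depend on the point only through the phase `φ = θ₁ + εθ₂`, so the bracket
`[V, W]` is `dφ(V) · ∂_φ W - dφ(W) · ∂_φ V`. Now `dφ` vanishes on `R₁` and `R₂` and equals
`1 + ε²` on `X`, while `∂_φ R₁ = R₂` and `∂_φ R₂ = -R₁`.
-/

open Real

theorem fderiv_comp_clm_apply {E F : Type*} [NormedAddCommGroup E] [NormedSpace ℝ E]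
    [NormedAddCommGroup F] [NormedSpace ℝ F] (ℓ : E →L[ℝ] ℝ) {f : ℝ → F} {f' : F} {p : E}
    (hf : HasDerivAt f f' (ℓ p)) (v : E) :
    fderiv ℝ (fun q => f (ℓ q)) p v = ℓ v • f' := by
  have h : HasFDerivAt (fun q => f (ℓ q)) _ p := hf.hasFDerivAt.comp p ℓ.hasFDerivAt
  simp [h.fderiv]

theorem vbr_comp_clm (ℓ : T3Pt →L[ℝ] ℝ) {f g f' g' : ℝ → T3Pt}
    (hf : ∀ t, HasDerivAt f (f' t) t) (hg : ∀ t, HasDerivAt g (g' t) t) (p : T3Pt) :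
    vbr (fun q => f (ℓ q)) (fun q => g (ℓ q)) p
      = ℓ (f (ℓ p)) • g' (ℓ p) - ℓ (g (ℓ p)) • f' (ℓ p) := by
  rw [vbr, fderiv_comp_clm_apply ℓ (hg _), fderiv_comp_clm_apply ℓ (hf _)]

noncomputable def phaseForm (ε : ℝ) : T3Pt →L[ℝ] ℝ :=
  ContinuousLinearMap.proj 0 + ε • ContinuousLinearMap.proj 1

theorem phaseForm_apply (ε : ℝ) (v : T3Pt) : phaseForm ε v = v 0 + ε * v 1 := rfl

noncomputable def frame₁ (ε t : ℝ) : T3Pt := ![-ε * cos t, cos t, sin t]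

noncomputable def frame₂ (ε t : ℝ) : T3Pt := ![ε * sin t, -sin t, cos t]

theorem hasDerivAt_frame₁ (ε t : ℝ) : HasDerivAt (frame₁ ε) (frame₂ ε t) t := by
  refine hasDerivAt_pi.2 fun i => ?_
  fin_cases i
  · simpa [frame₁, frame₂] using (hasDerivAt_cos t).const_mul (-ε)
  · simpa [frame₁, frame₂] using hasDerivAt_cos t
  · simpa [frame₁, frame₂] using hasDerivAt_sin t

theorem hasDerivAt_frame₂ (ε t : ℝ) : HasDerivAt (frame₂ ε) (-frame₁ ε t) t := by
  refine hasDerivAt_pi.2 fun i => ?_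
  fin_cases i
  · simpa [frame₁, frame₂] using (hasDerivAt_sin t).const_mul ε
  · simpa [frame₁, frame₂] using (hasDerivAt_sin t).fun_neg
  · simpa [frame₁, frame₂] using hasDerivAt_cos t

theorem phaseForm_frame₁ (ε t : ℝ) : phaseForm ε (frame₁ ε t) = 0 := by
  simp [phaseForm_apply, frame₁]

theorem phaseForm_frame₂ (ε t : ℝ) : phaseForm ε (frame₂ ε t) = 0 := by
  simp [phaseForm_apply, frame₂]

theorem phaseForm_axis (ε : ℝ) : phaseForm ε ![1, ε, 0] = 1 + ε ^ 2 := by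
  simp [phaseForm_apply]; ring

/-- for any `ε ∈ ℝ`, the fields
`R₁ = cos(θ₁+εθ₂)(∂/∂θ₂ - ε∂/∂θ₁) + sin(θ₁+εθ₂)∂/∂θ₃`,
`R₂ = -sin(θ₁+εθ₂)(∂/∂θ₂ - ε∂/∂θ₁) + cos(θ₁+εθ₂)∂/∂θ₃`,
`X = ∂/∂θ₁ + ε∂/∂θ₂` satisfy `[R₁,R₂] = 0`, `[R₂,X] = (1+ε²)R₁`,
`[X,R₁] = (1+ε²)R₂`. -/
theorem skew_torus_frame (ε : ℝ) (R₁ R₂ X : T3Pt → T3Pt)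
    (hR₁ : R₁ = fun p => ![-ε * Real.cos (p 0 + ε * p 1),
        Real.cos (p 0 + ε * p 1), Real.sin (p 0 + ε * p 1)])
    (hR₂ : R₂ = fun p => ![ε * Real.sin (p 0 + ε * p 1),
        -Real.sin (p 0 + ε * p 1), Real.cos (p 0 + ε * p 1)])
    (hX : X = fun _ => ![1, ε, 0]) :
    (∀ p : T3Pt, vbr R₁ R₂ p = 0) ∧
    (∀ p : T3Pt, vbr R₂ X p = (1 + ε ^ 2) • R₁ p) ∧
    (∀ p : T3Pt, vbr X R₁ p = (1 + ε ^ 2) • R₂ p) := by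
  have hR₁' : R₁ = fun p => frame₁ ε (phaseForm ε p) := hR₁
  have hR₂' : R₂ = fun p => frame₂ ε (phaseForm ε p) := hR₂
  have hX' : X = fun p => (fun _ : ℝ => ![1, ε, 0]) (phaseForm ε p) := hX
  have hconst : ∀ t : ℝ, HasDerivAt (fun _ : ℝ => ![(1 : ℝ), ε, 0]) 0 t :=
    fun _ => hasDerivAt_const _ _
  subst hR₁' hR₂' hX'
  refine ⟨fun p => ?_, fun p => ?_, fun p => ?_⟩
  · simp [vbr_comp_clm _ (hasDerivAt_frame₁ ε) (hasDerivAt_frame₂ ε), phaseForm_frame₁,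
      phaseForm_frame₂]
  · simp [vbr_comp_clm _ (hasDerivAt_frame₂ ε) hconst, phaseForm_frame₂, phaseForm_axis]
  · simp [vbr_comp_clm _ hconst (hasDerivAt_frame₁ ε), phaseForm_frame₁, phaseForm_axis]
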